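/- Let m : ℝ → [0,1] be a function with m = 1 on [0, 3/4] and supp m ⊆ [0,1), and let m_λ denote its Gaussian regularization at scale λ. Then there exist C, c > 0 such that for all ε, τ, λ, μ > 0 and all ξ ∈ ℝ, |e^{-ε|ξ|²/(2τ)} (1 - m_λ(|ξ|/μ))| ≤ e^{-εμ²/(8τ)} + C e^{-cλ}. -/

import Mathlib

/-!
Write `1 - m_λ = (1 - m)_λ`, using that the Gaussian kernel has mass one. For `|ξ| ≤ μ/2` the point
`s = |ξ|/μ ≤ 1/2` is at distance at least `1/4` from the support of `1 - m`, which lies in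
`|y| > 3/4`; splitting `e^{-λ(s-y)²/4} ≤ e^{-λ/128} e^{-λ(s-y)²/8}` there makes `(1 - m)_λ(s)`
at most `√2 e^{-λ/128}`. For `|ξ| ≥ μ/2` the heat factor alone is at most `e^{-εμ²/(8τ)}`,
while `0 ≤ m_λ ≤ 1`.
-/

open MeasureTheory Set

/-- Gaussian regularization (at scale `λ`) of the radial (even) extension of `m : ℝ → ℝ`:
`m_λ(s) = (λ/(4π))^{1/2} ∫ m(|y|) e^{-λ(s-y)²/4} dy`. -/
noncomputable def rreg (m : ℝ → ℝ) (lam s : ℝ) : ℝ :=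
  Real.sqrt (lam / (4 * Real.pi)) * ∫ y : ℝ, m (|y|) * Real.exp (-lam * (s - y) ^ 2 / 4)

open Real

lemma integrable_exp_neg_mul_sub_sq {b : ℝ} (hb : 0 < b) (s : ℝ) :
    Integrable fun y : ℝ => exp (-b * (s - y) ^ 2) :=
  (integrable_exp_neg_mul_sq hb).comp_sub_left s

lemma integral_exp_neg_mul_sub_sq (b s : ℝ) :
    ∫ y : ℝ, exp (-b * (s - y) ^ 2) = √(π / b) := by
  rw [integral_sub_left_eq_self (fun x => exp (-b * x ^ 2)), integral_gaussian]

lemma neg_mul_sq_div_four (lam x : ℝ) : -lam * x ^ 2 / 4 = -(lam / 4) * x ^ 2 := by ring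

section rreg

variable {g : ℝ → ℝ} {lam : ℝ}

lemma integrable_rreg_integrand (hg : Measurable g) (hg01 : ∀ t, g t ∈ Icc (0 : ℝ) 1)
    (hlam : 0 < lam) (s : ℝ) :
    Integrable fun y : ℝ => g |y| * exp (-lam * (s - y) ^ 2 / 4) := by
  simp_rw [neg_mul_sq_div_four]
  refine (integrable_exp_neg_mul_sub_sq (b := lam / 4) (by positivity) s).mono' (by fun_prop) ?_
  filter_upwards with y
  rw [norm_mul, norm_of_nonneg (hg01 _).1, norm_of_nonneg (exp_pos _).le]
  exact mul_le_of_le_one_left (exp_pos _).le (hg01 _).2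

lemma rreg_one (hlam : 0 < lam) (s : ℝ) : rreg (fun _ => 1) lam s = 1 := by
  have := pi_pos
  simp_rw [rreg, one_mul, neg_mul_sq_div_four, integral_exp_neg_mul_sub_sq,
    ← sqrt_mul (by positivity : 0 ≤ lam / (4 * π))]
  rw [show lam / (4 * π) * (π / (lam / 4)) = 1 by field_simp, sqrt_one]

lemma one_sub_rreg (hg : Measurable g) (hg01 : ∀ t, g t ∈ Icc (0 : ℝ) 1) (hlam : 0 < lam)
    (s : ℝ) : 1 - rreg g lam s = rreg (fun t => 1 - g t) lam s := by
  have hconst : ∀ t : ℝ, (1 : ℝ) ∈ Icc (0 : ℝ) 1 := fun _ => ⟨zero_le_one, le_rfl⟩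
  conv_lhs => rw [← rreg_one hlam s]
  rw [rreg, rreg, ← mul_sub, ← integral_sub
    (integrable_rreg_integrand measurable_const hconst hlam s) (integrable_rreg_integrand hg hg01 hlam s)]
  simp_rw [rreg, sub_mul]

lemma rreg_nonneg (hg : ∀ t, 0 ≤ g t) (s : ℝ) : 0 ≤ rreg g lam s :=
  mul_nonneg (sqrt_nonneg _) (integral_nonneg fun _ => mul_nonneg (hg _) (exp_pos _).le)

lemma rreg_le_one (hg : Measurable g) (hg01 : ∀ t, g t ∈ Icc (0 : ℝ) 1) (hlam : 0 < lam)
    (s : ℝ) : rreg g lam s ≤ 1 := by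
  have := rreg_nonneg (g := fun t => 1 - g t) (lam := lam) (fun t => by linarith [(hg01 t).2]) s
  rw [← one_sub_rreg hg hg01 hlam] at this
  linarith

lemma rreg_le_of_eqOn_zero {a d s : ℝ} (hg : Measurable g) (hg01 : ∀ t, g t ∈ Icc (0 : ℝ) 1)
    (hzero : EqOn g 0 (Icc 0 a)) (hlam : 0 < lam) (hd : 0 ≤ d) (hs : |s| + d ≤ a) :
    rreg g lam s ≤ √2 * exp (-lam * d ^ 2 / 8) := by
  have := pi_pos
  have hpt : ∀ y : ℝ, g |y| * exp (-lam * (s - y) ^ 2 / 4) ≤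
      exp (-lam * d ^ 2 / 8) * exp (-(lam / 8) * (s - y) ^ 2) := by
    intro y
    rcases le_or_gt |y| a with hy | hy
    · rw [hzero ⟨abs_nonneg y, hy⟩, Pi.zero_apply, zero_mul]
      positivity
    · have hfar : d ≤ |s - y| := by
        linarith [abs_sub_abs_le_abs_sub y s, abs_sub_comm s y]
      have hsq : d ^ 2 ≤ (s - y) ^ 2 := by
        rw [← sq_abs (s - y)]
        exact pow_le_pow_left₀ hd hfar 2
      rw [← exp_add]
      calc g |y| * exp (-lam * (s - y) ^ 2 / 4) ≤ exp (-lam * (s - y) ^ 2 / 4) :=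
            mul_le_of_le_one_left (exp_pos _).le (hg01 _).2
        _ ≤ _ := exp_le_exp.2 (by nlinarith)
  have hint : ∫ y : ℝ, g |y| * exp (-lam * (s - y) ^ 2 / 4) ≤
      exp (-lam * d ^ 2 / 8) * √(π / (lam / 8)) := by
    rw [← integral_exp_neg_mul_sub_sq _ s, ← integral_const_mul]
    exact integral_mono (integrable_rreg_integrand hg hg01 hlam s)
      ((integrable_exp_neg_mul_sub_sq (by positivity) s).const_mul _) hpt
  calc rreg g lam s ≤ √(lam / (4 * π)) * (exp (-lam * d ^ 2 / 8) * √(π / (lam / 8))) :=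
        mul_le_mul_of_nonneg_left hint (sqrt_nonneg _)
    _ = √(lam / (4 * π) * (π / (lam / 8))) * exp (-lam * d ^ 2 / 8) := by
        rw [sqrt_mul (by positivity)]; ring
    _ = √2 * exp (-lam * d ^ 2 / 8) := by
        rw [show lam / (4 * π) * (π / (lam / 8)) = 2 by field_simp; ring]

lemma abs_one_sub_rreg_le_one (hg : Measurable g) (hg01 : ∀ t, g t ∈ Icc (0 : ℝ) 1)
    (hlam : 0 < lam) (s : ℝ) : |1 - rreg g lam s| ≤ 1 := by
  have h0 := rreg_nonneg (fun t => (hg01 t).1) (lam := lam) s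
  have h1 := rreg_le_one hg hg01 hlam s
  exact abs_le.2 ⟨by linarith, by linarith⟩

lemma abs_one_sub_rreg_le_of_eqOn_one {a d s : ℝ} (hg : Measurable g)
    (hg01 : ∀ t, g t ∈ Icc (0 : ℝ) 1) (hone : EqOn g 1 (Icc 0 a)) (hlam : 0 < lam) (hd : 0 ≤ d)
    (hs : |s| + d ≤ a) : |1 - rreg g lam s| ≤ √2 * exp (-lam * d ^ 2 / 8) := by
  rw [abs_of_nonneg (sub_nonneg.2 (rreg_le_one hg hg01 hlam s)), one_sub_rreg hg hg01 hlam]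
  refine rreg_le_of_eqOn_zero (hg.const_sub 1) (fun t => ?_) (fun t ht => ?_) hlam hd hs
  · exact ⟨sub_nonneg.2 (hg01 t).2, sub_le_self _ (hg01 t).1⟩
  · simp [hone ht]

end rreg

lemma exp_neg_mul_sq_div_le_of_half_le_abs {ε τ μ ξ : ℝ} (hε : 0 ≤ ε) (hτ : 0 < τ) (hμ : 0 ≤ μ)
    (hξ : μ / 2 ≤ |ξ|) : exp (-ε * ξ ^ 2 / (2 * τ)) ≤ exp (-ε * μ ^ 2 / (8 * τ)) := by
  have : μ ^ 2 ≤ 4 * ξ ^ 2 := by nlinarith [sq_abs ξ]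
  rw [exp_le_exp, div_le_div_iff₀ (by positivity) (by positivity)]
  nlinarith [mul_nonneg hε hτ.le]

theorem heat_multiplier_highfreq_general (m : ℝ → ℝ) (hmeas : Measurable m)
    (hrange : ∀ s, m s ∈ Icc (0 : ℝ) 1)
    (hone : ∀ s ∈ Icc (0 : ℝ) (3 / 4), m s = 1) :
    ∃ C c : ℝ, 0 < C ∧ 0 < c ∧
      ∀ ε τ lam μ : ℝ, 0 < ε → 0 < τ → 0 < lam → 0 < μ → ∀ ξ : ℝ,
        |Real.exp (-ε * ξ ^ 2 / (2 * τ)) * (1 - rreg m lam (|ξ| / μ))| ≤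
          Real.exp (-ε * μ ^ 2 / (8 * τ)) + C * Real.exp (-c * lam) := by
  refine ⟨√2, 1 / 128, by positivity, by norm_num, fun ε τ lam μ hε hτ hlam hμ ξ => ?_⟩
  rw [abs_mul, abs_of_pos (exp_pos _)]
  rcases le_or_gt |ξ| (μ / 2) with hlow | hhigh
  · have hs : |(|ξ| / μ)| + 1 / 4 ≤ 3 / 4 := by
      rw [abs_of_nonneg (by positivity), div_add' _ _ _ hμ.ne', div_le_iff₀ hμ]; linarith
    have hheat : exp (-ε * ξ ^ 2 / (2 * τ)) ≤ 1 := exp_le_one_iff.2 (by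
      apply div_nonpos_of_nonpos_of_nonneg _ (by positivity); nlinarith [sq_nonneg ξ])
    calc exp (-ε * ξ ^ 2 / (2 * τ)) * |1 - rreg m lam (|ξ| / μ)|
        ≤ 1 * (√2 * exp (-lam * (1 / 4) ^ 2 / 8)) :=
          mul_le_mul hheat (abs_one_sub_rreg_le_of_eqOn_one hmeas hrange hone hlam
            (by norm_num) hs) (abs_nonneg _) zero_le_one
      _ = √2 * exp (-(1 / 128) * lam) := by ring_nf
      _ ≤ _ := by linarith [exp_pos (-ε * μ ^ 2 / (8 * τ))]
  · calc exp (-ε * ξ ^ 2 / (2 * τ)) * |1 - rreg m lam (|ξ| / μ)|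
        ≤ exp (-ε * μ ^ 2 / (8 * τ)) * 1 :=
          mul_le_mul (exp_neg_mul_sq_div_le_of_half_le_abs hε.le hτ hμ.le hhigh.le)
            (abs_one_sub_rreg_le_one hmeas hrange hlam _) (abs_nonneg _) (exp_pos _).le
      _ ≤ _ := by linarith [mul_pos (sqrt_pos.2 two_pos) (exp_pos (-(1 / 128) * lam))]

/-- Let `m : ℝ → [0,1]` (radial) with `m = 1` on `[0, 3/4]` and `supp m ⊆ [0,1)`.
Then there exist `C, c > 0` such that for all `ε, τ, λ, μ > 0` and all `ξ ∈ ℝ`,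
`|e^{-ε|ξ|²/(2τ)} (1 - m_λ(|ξ|/μ))| ≤ e^{-εμ²/(8τ)} + C e^{-cλ}`. -/
theorem heat_multiplier_highfreq (m : ℝ → ℝ) (hmeas : Measurable m)
    (hrange : ∀ s, m s ∈ Icc (0 : ℝ) 1)
    (hone : ∀ s ∈ Icc (0 : ℝ) (3 / 4), m s = 1)
    (hsupp : ∀ s, m s ≠ 0 → s ∈ Ico (0 : ℝ) 1) :
    ∃ C c : ℝ, 0 < C ∧ 0 < c ∧
      ∀ ε τ lam μ : ℝ, 0 < ε → 0 < τ → 0 < lam → 0 < μ → ∀ ξ : ℝ,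
        |Real.exp (-ε * ξ ^ 2 / (2 * τ)) * (1 - rreg m lam (|ξ| / μ))| ≤
          Real.exp (-ε * μ ^ 2 / (8 * τ)) + C * Real.exp (-c * lam) :=
  heat_multiplier_highfreq_general m hmeas hrange hone
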